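/- For q = 1 and any commutative ring R with 1, the action of the walled Brauer algebra B^n_{r,s} on V^{⊗r} ⊗ (V*)^{⊗s} (V = R^n) is faithful if and only if n ≥ r + s. -/

import Mathlib

/-! Reflecting the vertices to the right of the wall into the opposite row turns a walled
Brauer diagram into one all of whose edges are propagating, i.e. into a permutation of
`Fin (r + s)`. This is a bijection, and after the matching relabelling of the tensor indices
each diagram matrix becomes the place-permutation matrix of its permutation, so faithfulness
amounts to the linear independence of the permutation matrices on `V^{⊗(r+s)}`. If
`r + s ≤ n`, an injective multi-index `x` reads off the coefficient of `σ` from the entry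
`(x, x ∘ σ)`; if `n < r + s`, every entry of `∑ sign σ • σ` is a determinant with two equal
rows. -/

namespace ClassicalWalledBrauer

variable (R : Type*) [CommRing R] (n r s : ℕ)

/-- Multi-indices labelling the basis of `V^{⊗r} ⊗ (V^*)^{⊗s}` (or of `V^{⊗(r+s)}`),
`V = R^n`. -/
abbrev Idx (n m : ℕ) := Fin m → Fin n

/-- Mixed tensor space `V^{⊗r} ⊗ (V^*)^{⊗s}` (and likewise ordinary tensor space
`V^{⊗(r+s)}`), modelled on its basis of multi-indices; positions `< r` carry `V`,
positions `≥ r` carry `V^*` (identified with `V` via `v_i ↦ v_i^*`). -/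
abbrev TSpace (R : Type*) [CommRing R] (n m : ℕ) := Idx n m → R

/-- Matrix of the action of `g ∈ GL_n(R)` on mixed tensor space: `g` acts naturally on the
`V`-factors (positions `< r`) and by `(g·f)(v) = f(g⁻¹ v)` on the `V^*`-factors. -/
def glMixedMatrix (g : GL (Fin n) R) : Matrix (Idx n (r + s)) (Idx n (r + s)) R :=
  fun a a' => ∏ k : Fin (r + s),
    if (k : ℕ) < r then (g : Matrix (Fin n) (Fin n) R) (a k) (a' k)
    else ((g⁻¹ : GL (Fin n) R) : Matrix (Fin n) (Fin n) R) (a' k) (a k)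

/-- Matrix of the natural action of `g ∈ GL_n(R)` on ordinary tensor space `V^{⊗m}`. -/
def glOrdMatrix (m : ℕ) (g : GL (Fin n) R) : Matrix (Idx n m) (Idx n m) R :=
  fun a a' => ∏ k : Fin m, (g : Matrix (Fin n) (Fin n) R) (a k) (a' k)

/-- `G`-endomorphisms of mixed tensor space. -/
def EndGMixed : Set (Module.End R (TSpace R n (r + s))) :=
  {φ | ∀ g : GL (Fin n) R, Commute φ (Matrix.toLin' (glMixedMatrix R n r s g))}

/-- `G`-endomorphisms of ordinary tensor space `V^{⊗(r+s)}`. -/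
def EndGOrd : Set (Module.End R (TSpace R n (r + s))) :=
  {φ | ∀ g : GL (Fin n) R, Commute φ (Matrix.toLin' (glOrdMatrix R n (r + s) g))}

/-- Vertices of a Brauer `(r+s)`-diagram: top row (`inl`) and bottom row (`inr`). -/
abbrev Vertex (m : ℕ) := Fin m ⊕ Fin m

/-- The row (top = `true`) of a vertex. -/
def rowOf {m : ℕ} : Vertex m → Bool := Sum.elim (fun _ => true) (fun _ => false)

/-- Whether a vertex lies to the left of the wall (in the first `r` positions). -/
def leftOf {m : ℕ} (r : ℕ) : Vertex m → Bool :=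
  Sum.elim (fun k => decide ((k : ℕ) < r)) (fun k => decide ((k : ℕ) < r))

/-- A walled Brauer diagram: a perfect matching of the `2(r+s)` vertices such that
propagating edges (connecting opposite rows) stay on one side of the wall, and horizontal
edges (within a row) cross the wall. -/
def IsWalled (d : Vertex (r + s) → Vertex (r + s)) : Prop :=
  (∀ v, d (d v) = v) ∧ (∀ v, d v ≠ v) ∧
  (∀ v, (rowOf v ≠ rowOf (d v) → leftOf r v = leftOf r (d v)) ∧
        (rowOf v = rowOf (d v) → leftOf r v ≠ leftOf r (d v)))

/-- The walled Brauer diagrams. -/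
def WalledDiagram := {d : Vertex (r + s) → Vertex (r + s) // IsWalled r s d}

/-- The matrix of the action of a Brauer diagram `d` (for `q = 1`): the `(a, b)` entry is
`1` if both ends of each edge of `d` carry the same index (top row labelled by `a`, bottom
row by `b`), and `0` otherwise. -/
def diagMatrix (m : ℕ) (d : Vertex m → Vertex m) : Matrix (Idx n m) (Idx n m) R :=
  fun a b =>
    if ∀ v, Sum.elim a b v = Sum.elim a b (d v) then 1 else 0

/-- Matrix of the place-permutation action of `σ ∈ 𝔖_m` on `V^{⊗m}` (the totally
propagating Brauer diagram of `σ`). -/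
def permMatrix (m : ℕ) (σ : Equiv.Perm (Fin m)) : Matrix (Idx n m) (Idx n m) R :=
  fun a b => if b = a ∘ σ then 1 else 0

/-- The representation `σ_{r,s}` of the walled Brauer algebra `B^n_{r,s}` (as the free
`R`-module on walled Brauer diagrams) on mixed tensor space. -/
noncomputable def walledRep :
    (WalledDiagram r s →₀ R) →ₗ[R] Module.End R (TSpace R n (r + s)) :=
  Finsupp.lift (Module.End R (TSpace R n (r + s))) R (WalledDiagram r s)
    (fun d => Matrix.toLin' (diagMatrix R n (r + s) d.1))

section Permutations

variable {R n} {m : ℕ}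

lemma sum_sign_smul_permMatrix_apply (x y : Idx n m) :
    (∑ σ : Equiv.Perm (Fin m), ((Equiv.Perm.sign σ : ℤ) : R) • permMatrix R n m σ) x y =
      (Matrix.of fun k l => if x k = y l then (1 : R) else 0).det := by
  rw [Matrix.det_apply']
  simp only [Matrix.sum_apply, Matrix.smul_apply, smul_eq_mul, Matrix.of_apply,
    Finset.prod_boole, permMatrix]
  refine Finset.sum_congr rfl fun σ _ => ?_
  simp only [Finset.mem_univ, forall_const, funext_iff, Function.comp_apply, eq_comm]

lemma sum_sign_smul_permMatrix_eq_zero (h : n < m) :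
    ∑ σ : Equiv.Perm (Fin m), ((Equiv.Perm.sign σ : ℤ) : R) • permMatrix R n m σ = 0 := by
  ext x y
  obtain ⟨i, j, hij, hx⟩ := Fintype.exists_ne_map_eq_of_card_lt x (by simpa using h)
  rw [sum_sign_smul_permMatrix_apply, Matrix.zero_apply]
  exact Matrix.det_zero_of_row_eq hij (funext fun l => by simp [hx])

lemma linearIndependent_permMatrix (h : m ≤ n) : LinearIndependent R (permMatrix R n m) := by
  let x : Idx n m := Fin.castLE h
  let coeff : Matrix (Idx n m) (Idx n m) R →ₗ[R] Equiv.Perm (Fin m) → R :=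
    { toFun M τ := M x (x ∘ τ)
      map_add' _ _ := rfl
      map_smul' _ _ := rfl }
  refine .of_comp coeff ?_
  convert (Pi.basisFun R (Equiv.Perm (Fin m))).linearIndependent using 1
  ext σ τ
  rw [Pi.basisFun_apply]
  change permMatrix R n m σ x (x ∘ τ) = (Pi.single σ 1 : Equiv.Perm (Fin m) → R) τ
  simp [permMatrix, Pi.single_apply, (Fin.castLE_injective h).comp_left.eq_iff, eq_comm, x]

theorem linearIndependent_permMatrix_iff [Nontrivial R] :
    LinearIndependent R (permMatrix R n m) ↔ m ≤ n := by
  refine ⟨fun hli => ?_, linearIndependent_permMatrix⟩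
  by_contra! h
  have := Fintype.linearIndependent_iff.1 hli _ (sum_sign_smul_permMatrix_eq_zero h) 1
  simp at this

end Permutations

section Diagrams

variable {R n} {m : ℕ}

lemma _root_.Function.Involutive.involutive_comp_comp_iff {α : Type*} {f g : α → α}
    (hf : Function.Involutive f) : Function.Involutive (f ∘ g ∘ f) ↔ Function.Involutive g :=
  ⟨fun h x => hf.injective (by simpa [hf _] using h (f x)), fun h x => by simp [hf _, h _]⟩

def flipRight (r : ℕ) (v : Vertex m) : Vertex m := if leftOf r v then v else v.swap

lemma flipRight_involutive (r : ℕ) : Function.Involutive (flipRight (m := m) r) := by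
  rintro (k | k) <;> by_cases h : (k : ℕ) < r <;> simp [flipRight, leftOf, h]

lemma rowOf_flipRight (r : ℕ) (v : Vertex m) :
    rowOf (flipRight r v) = (leftOf r v == rowOf v) := by
  rcases v with k | k <;> by_cases h : (k : ℕ) < r <;> simp [flipRight, leftOf, rowOf, h]

def IsPropagating (e : Vertex m → Vertex m) : Prop :=
  Function.Involutive e ∧ ∀ v, rowOf (e v) = !rowOf v

def propagating (σ : Equiv.Perm (Fin m)) : Vertex m → Vertex m :=
  Sum.elim (Sum.inr ∘ σ) (Sum.inl ∘ σ.symm)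

lemma isPropagating_propagating (σ : Equiv.Perm (Fin m)) : IsPropagating (propagating σ) :=
  ⟨fun v => by cases v <;> simp [propagating], fun v => by cases v <;> rfl⟩

def position : Vertex m → Fin m := Sum.elim id id

lemma eq_inr_of_rowOf_eq_false {v : Vertex m} (h : rowOf v = false) : v = .inr (position v) := by
  cases v
  · simp [rowOf] at h
  · rfl

lemma eq_inl_of_rowOf_eq_true {v : Vertex m} (h : rowOf v = true) : v = .inl (position v) := by
  cases v
  · rfl
  · simp [rowOf] at h

def propagatingEquiv : Equiv.Perm (Fin m) ≃ {e : Vertex m → Vertex m // IsPropagating e} where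
  toFun σ := ⟨propagating σ, isPropagating_propagating σ⟩
  invFun e :=
    { toFun i := position (e.1 (.inl i))
      invFun j := position (e.1 (.inr j))
      left_inv i := by
        change position (e.1 (.inr (position (e.1 (.inl i))))) = i
        rw [← eq_inr_of_rowOf_eq_false (e.2.2 _), e.2.1]
        rfl
      right_inv j := by
        change position (e.1 (.inl (position (e.1 (.inr j))))) = j
        rw [← eq_inl_of_rowOf_eq_true (e.2.2 _), e.2.1]
        rfl }
  left_inv σ := rfl
  right_inv e := by
    ext v
    cases v
    · exact (eq_inr_of_rowOf_eq_false (e.2.2 _)).symm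
    · exact (eq_inl_of_rowOf_eq_true (e.2.2 _)).symm

lemma isWalled_iff_isPropagating (d : Vertex (r + s) → Vertex (r + s)) :
    IsWalled r s d ↔ IsPropagating (flipRight r ∘ d ∘ flipRight r) := by
  have hf := flipRight_involutive (m := r + s) r
  have edge : ∀ v, ((rowOf v ≠ rowOf (d v) → leftOf r v = leftOf r (d v)) ∧
      (rowOf v = rowOf (d v) → leftOf r v ≠ leftOf r (d v))) ↔
        rowOf (flipRight r (d v)) = !rowOf (flipRight r v) := by
    intro v
    rw [rowOf_flipRight, rowOf_flipRight]
    generalize rowOf v = a, rowOf (d v) = b, leftOf r v = c, leftOf r (d v) = e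
    revert a b c e
    decide
  have hrow : (∀ w, rowOf ((flipRight r ∘ d ∘ flipRight r) w) = !rowOf w) ↔
      ∀ v, rowOf (flipRight r (d v)) = !rowOf (flipRight r v) := by
    refine hf.surjective.forall.trans ?_
    simp only [Function.comp_apply, hf _]
  rw [IsPropagating, hf.involutive_comp_comp_iff, hrow]
  refine ⟨fun ⟨hinv, _, hedge⟩ => ⟨hinv, fun v => (edge v).1 (hedge v)⟩,
    fun ⟨hinv, hedge⟩ => ⟨hinv, fun v hv => ?_, fun v => (edge v).2 (hedge v)⟩⟩
  simpa [hv] using hedge v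

def walledEquiv (r s : ℕ) :
    WalledDiagram r s ≃ {e : Vertex (r + s) → Vertex (r + s) // IsPropagating e} :=
  let f := (flipRight_involutive r).toPerm _
  Equiv.subtypeEquiv (f.arrowCongr f) (isWalled_iff_isPropagating r s)

def diagEquiv (r s : ℕ) : Equiv.Perm (Fin (r + s)) ≃ WalledDiagram r s :=
  propagatingEquiv.trans (walledEquiv r s).symm

lemma coe_diagEquiv (σ : Equiv.Perm (Fin (r + s))) :
    (diagEquiv r s σ).1 = flipRight r ∘ propagating σ ∘ flipRight r :=
  rfl

lemma forall_eq_comp_propagating_iff {α : Type*} (L : Vertex m → α) (σ : Equiv.Perm (Fin m)) :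
    (∀ w, L w = L (propagating σ w)) ↔ L ∘ Sum.inl = L ∘ Sum.inr ∘ σ := by
  refine ⟨fun h => funext fun i => h (.inl i), fun h w => ?_⟩
  rcases w with i | j
  · exact congrFun h i
  · simpa [propagating] using (congrFun h (σ.symm j)).symm

def relabel (r : ℕ) : Idx n m × Idx n m ≃ Idx n m × Idx n m :=
  (Equiv.sumArrowEquivProdArrow _ _ _).symm.trans <|
    (((flipRight_involutive r).toPerm _).arrowCongr (Equiv.refl _)).trans <|
      (Equiv.sumArrowEquivProdArrow _ _ _).trans (Equiv.prodComm _ _)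

lemma relabel_apply (a b : Idx n m) : relabel r (a, b) =
    (Sum.elim a b ∘ flipRight r ∘ Sum.inr, Sum.elim a b ∘ flipRight r ∘ Sum.inl) :=
  rfl

lemma diagMatrix_diagEquiv (σ : Equiv.Perm (Fin (r + s))) (a b : Idx n (r + s)) :
    diagMatrix R n (r + s) (diagEquiv r s σ).1 a b =
      permMatrix R n (r + s) σ (relabel r (a, b)).1 (relabel r (a, b)).2 := by
  rw [coe_diagEquiv, relabel_apply]
  refine if_congr ?_ rfl rfl
  refine (flipRight_involutive r).surjective.forall.trans ?_
  simp only [Function.comp_apply, flipRight_involutive r _]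
  exact forall_eq_comp_propagating_iff (Sum.elim a b ∘ flipRight r) σ

end Diagrams

section Faithfulness

variable {R n}

@[simps]
def pairReindex {ι κ : Type*} (e : ι × ι ≃ κ × κ) : Matrix κ κ R →ₗ[R] Matrix ι ι R where
  toFun M i j := M (e (i, j)).1 (e (i, j)).2
  map_add' _ _ := rfl
  map_smul' _ _ := rfl

lemma pairReindex_injective {ι κ : Type*} (e : ι × ι ≃ κ × κ) :
    Function.Injective (pairReindex (R := R) e) := fun M N h => by
  ext k l
  simpa using congrFun₂ h (e.symm (k, l)).1 (e.symm (k, l)).2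

lemma linearIndependent_diagMatrix_iff :
    LinearIndependent R (fun d : WalledDiagram r s => diagMatrix R n (r + s) d.1) ↔
      LinearIndependent R (permMatrix R n (r + s)) := by
  rw [← (pairReindex (relabel r)).linearIndependent_iff_of_injOn (v := permMatrix R n (r + s))
    (pairReindex_injective _).injOn]
  refine (linearIndependent_equiv' (diagEquiv r s) (funext fun σ => ?_)).symm
  ext a b
  exact diagMatrix_diagEquiv (R := R) r s σ a b

lemma injective_walledRep_iff :
    Function.Injective (walledRep R n r s) ↔
      LinearIndependent R (fun d : WalledDiagram r s => diagMatrix R n (r + s) d.1) := by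
  have : walledRep R n r s = Matrix.toLin'.toLinearMap ∘ₗ
      Finsupp.linearCombination R (fun d : WalledDiagram r s => diagMatrix R n (r + s) d.1) := by
    ext d : 2
    simp [walledRep]
  rw [this, LinearMap.coe_comp, LinearEquiv.coe_coe, EquivLike.comp_injective]
  rfl

end Faithfulness

/-- q = 1: for any commutative ring `R` with `1`, the action of the walled
Brauer algebra `B^n_{r,s}` on `V^{⊗r} ⊗ (V^*)^{⊗s}` (`V = R^n`) is faithful if and only if
`n ≥ r + s`. -/
theorem walled_faithful_iff [Nontrivial R] :
    Function.Injective (walledRep R n r s) ↔ r + s ≤ n := by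
  rw [injective_walledRep_iff, linearIndependent_diagMatrix_iff, linearIndependent_permMatrix_iff]

end ClassicalWalledBrauer
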